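/- arXiv:1203.4008 — 2 statements merged into one kernel-verified Lean document; each statement's English description precedes it below -/
import Mathlib

section
/- For every erasure probability ε with 0 < ε < 1, every integer N ≥ 1, and all integers K, T with 2 ≤ K and K+1 ≤ T, the expected immediate reward is log-concave in the block size: R_T(K)² ≥ R_T(K−1) · R_T(K+1). -/
/-- Single-receiver decoding probability: probability that one receiver obtains
`K` successful receptions within `T` slots over a binary erasure channel with
erasure probability `ε`.  (The sum over `Finset.Icc K T` is empty, i.e. `0`,
when `T < K`.) -/
noncomputable def Phat (ε : ℝ) (K T : ℕ) : ℝ :=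
  ∑ τ ∈ Finset.Icc K T, ((τ - 1).choose (K - 1) : ℝ) * ε ^ (τ - K) * (1 - ε) ^ K

/-- Probability that all `N` receivers (over i.i.d. erasure channels) decode a
network-coded block of `K` packets within `T` slots. -/
noncomputable def Pall (ε : ℝ) (N K T : ℕ) : ℝ := (Phat ε K T) ^ N

/-- Expected immediate reward: expected number of packets decoded by all `N`
receivers when a block of size `K` is transmitted with `T` slots remaining. -/
noncomputable def Rew (ε : ℝ) (N T K : ℕ) : ℝ := (K : ℝ) * Pall ε N K T

/-!
`Phat ε K T` is the probability that a binomial variable with `T` trials and success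
probability `1 - ε` is at least `K`: both sides obey the same Pascal recurrence in `T`.
The binomial weights `aⱼ` have nonincreasing ratios `aⱼ₊₁ / aⱼ`, and the tails `tₘ = ∑_{j ≥ m} aⱼ`
of such a sequence are log-concave: since `tₘ = aₘ + tₘ₊₁`, the inequality
`tₘ tₘ₊₂ ≤ tₘ₊₁²` reduces to `aₘ tₘ₊₂ ≤ aₘ₊₁ tₘ₊₁`, which holds term by term.
Log-concavity in `K` survives the `N`-th power and multiplication by the factor `K`.
-/

open Finset

namespace Finset

variable {M : Type*} [AddCommMonoid M]

theorem sum_Icc_add' (f : ℕ → M) (a b c : ℕ) :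
    ∑ x ∈ Icc a b, f (x + c) = ∑ x ∈ Icc (a + c) (b + c), f x := by
  rw [← map_add_right_Icc, sum_map]
  rfl

theorem sum_Icc_eq_add_sum_Icc_succ (f : ℕ → M) {a b : ℕ} (h : a ≤ b) :
    ∑ x ∈ Icc a b, f x = f a + ∑ x ∈ Icc (a + 1) b, f x := by
  rw [Icc_add_one_left_eq_Ioc, add_sum_Ioc_eq_sum_Icc h]

end Finset

theorem Nat.choose_mul_choose_succ_le (n : ℕ) {i j : ℕ} (h : i ≤ j) :
    n.choose i * n.choose (j + 1) ≤ n.choose (i + 1) * n.choose j := by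
  refine Nat.le_of_mul_le_mul_right ?_ (Nat.mul_pos i.succ_pos j.succ_pos)
  calc n.choose i * n.choose (j + 1) * ((i + 1) * (j + 1))
      = n.choose i * (n.choose (j + 1) * (j + 1)) * (i + 1) := by ring
    _ = n.choose i * n.choose j * ((n - j) * (i + 1)) := by
        rw [Nat.choose_succ_right_eq]; ring
    _ ≤ n.choose i * n.choose j * ((n - i) * (j + 1)) :=
        Nat.mul_le_mul_left _ (Nat.mul_le_mul (by omega) (by omega))
    _ = n.choose (i + 1) * (i + 1) * n.choose j * (j + 1) := by
        rw [Nat.choose_succ_right_eq]; ring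
    _ = n.choose (i + 1) * n.choose j * ((i + 1) * (j + 1)) := by ring

section Binomial

variable {R : Type*} [CommSemiring R]

-- For `j > n` the exponent `n - j` truncates, but then `n.choose j = 0`.
def binomialWeight (p q : R) (n j : ℕ) : R := n.choose j * p ^ j * q ^ (n - j)

theorem binomialWeight_succ_succ (p q : R) (n j : ℕ) :
    binomialWeight p q (n + 1) (j + 1) =
      p * binomialWeight p q n j + q * binomialWeight p q n (j + 1) := by
  unfold binomialWeight
  rw [Nat.choose_succ_succ', Nat.cast_add, Nat.add_sub_add_right]
  rcases lt_or_ge n (j + 1) with h | h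
  · simp only [Nat.choose_eq_zero_of_lt h, Nat.cast_zero]; ring
  · rw [show n - j = n - (j + 1) + 1 by omega]; ring

def binomialTail (p q : R) (n k : ℕ) : R := ∑ j ∈ Icc k n, binomialWeight p q n j

theorem binomialTail_succ_succ {p q : R} (hpq : p + q = 1) {n k : ℕ} (h : k ≤ n) :
    binomialTail p q (n + 1) (k + 1) =
      binomialTail p q n (k + 1) + p * binomialWeight p q n k := by
  have hvanish : binomialWeight p q n (n + 1) = 0 := by simp [binomialWeight]
  have hbot : ∑ j ∈ Icc k n, binomialWeight p q n j =
      binomialWeight p q n k + binomialTail p q n (k + 1) :=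
    sum_Icc_eq_add_sum_Icc_succ _ h
  have htop : ∑ j ∈ Icc k n, binomialWeight p q n (j + 1) = binomialTail p q n (k + 1) := by
    rw [sum_Icc_add', sum_Icc_succ_top (by omega), hvanish, add_zero, binomialTail]
  calc binomialTail p q (n + 1) (k + 1)
      = ∑ j ∈ Icc k n, binomialWeight p q (n + 1) (j + 1) := (sum_Icc_add' _ k n 1).symm
    _ = p * ∑ j ∈ Icc k n, binomialWeight p q n j
          + q * ∑ j ∈ Icc k n, binomialWeight p q n (j + 1) := by
        simp only [binomialWeight_succ_succ, sum_add_distrib, mul_sum]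
    _ = (p + q) * binomialTail p q n (k + 1) + p * binomialWeight p q n k := by
        rw [hbot, htop]; ring
    _ = binomialTail p q n (k + 1) + p * binomialWeight p q n k := by rw [hpq, one_mul]

variable [PartialOrder R] [IsOrderedRing R]

theorem sum_Icc_mul_sum_Icc_add_two_le_sq {a : ℕ → R} (ha : ∀ j, 0 ≤ a j)
    (hratio : ∀ i j, i ≤ j → a i * a (j + 1) ≤ a (i + 1) * a j) (m n : ℕ) :
    (∑ j ∈ Icc m n, a j) * ∑ j ∈ Icc (m + 2) n, a j ≤ (∑ j ∈ Icc (m + 1) n, a j) ^ 2 := by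
  rcases lt_or_ge n (m + 2) with hn | hn
  · rw [Icc_eq_empty_of_lt hn, sum_empty, mul_zero]
    exact pow_nonneg (sum_nonneg fun j _ ↦ ha j) 2
  have split₀ := sum_Icc_eq_add_sum_Icc_succ a (show m ≤ n by omega)
  have split₁ := sum_Icc_eq_add_sum_Icc_succ a (show m + 1 ≤ n by omega)
  have shift : ∑ j ∈ Icc (m + 1) n, a (j + 1) = (∑ j ∈ Icc (m + 2) n, a j) + a (n + 1) := by
    rw [sum_Icc_add', ← sum_Icc_succ_top (by omega)]
  set t₁ := ∑ j ∈ Icc (m + 1) n, a j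
  set t₂ := ∑ j ∈ Icc (m + 2) n, a j
  have key : a m * t₂ ≤ a (m + 1) * t₁ := calc
    a m * t₂ ≤ a m * ∑ j ∈ Icc (m + 1) n, a (j + 1) :=
        mul_le_mul_of_nonneg_left (shift ▸ le_add_of_nonneg_right (ha _)) (ha m)
    _ = ∑ j ∈ Icc (m + 1) n, a m * a (j + 1) := mul_sum _ _ _
    _ ≤ ∑ j ∈ Icc (m + 1) n, a (m + 1) * a j :=
        sum_le_sum fun j hj ↦ hratio m j (by have := (mem_Icc.mp hj).1; omega)
    _ = a (m + 1) * t₁ := (mul_sum _ _ _).symm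
  calc (∑ j ∈ Icc m n, a j) * t₂ = a m * t₂ + t₁ * t₂ := by rw [split₀, add_mul]
    _ ≤ a (m + 1) * t₁ + t₁ * t₂ := by gcongr
    _ = t₁ * (a (m + 1) + t₂) := by ring
    _ = t₁ ^ 2 := by rw [← split₁, sq]

theorem binomialWeight_nonneg {p q : R} (hp : 0 ≤ p) (hq : 0 ≤ q) (n j : ℕ) :
    0 ≤ binomialWeight p q n j := by
  unfold binomialWeight
  positivity

theorem binomialWeight_mul_succ_le {p q : R} (hp : 0 ≤ p) (hq : 0 ≤ q) (n : ℕ) {i j : ℕ}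
    (h : i ≤ j) :
    binomialWeight p q n i * binomialWeight p q n (j + 1) ≤
      binomialWeight p q n (i + 1) * binomialWeight p q n j := by
  rcases lt_or_ge n (j + 1) with hn | hn
  · simp only [binomialWeight, Nat.choose_eq_zero_of_lt hn, Nat.cast_zero, zero_mul, mul_zero]
    exact mul_nonneg (binomialWeight_nonneg hp hq n _) (binomialWeight_nonneg hp hq n j)
  have hchoose : (n.choose i * n.choose (j + 1) : R) ≤ n.choose (i + 1) * n.choose j := by
    exact_mod_cast Nat.mono_cast (α := R) (Nat.choose_mul_choose_succ_le n h)
  calc binomialWeight p q n i * binomialWeight p q n (j + 1)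
      = n.choose i * n.choose (j + 1) * (p ^ (i + (j + 1)) * q ^ (n - i + (n - (j + 1)))) := by
        simp only [binomialWeight, pow_add]; ring
    _ ≤ n.choose (i + 1) * n.choose j * (p ^ (i + (j + 1)) * q ^ (n - i + (n - (j + 1)))) := by
        gcongr
    _ = binomialWeight p q n (i + 1) * binomialWeight p q n j := by
        rw [show i + (j + 1) = i + 1 + j by omega,
          show n - i + (n - (j + 1)) = n - (i + 1) + (n - j) by omega]
        simp only [binomialWeight, pow_add]; ring

end Binomial

theorem Phat_nonneg {ε : ℝ} (hε0 : 0 ≤ ε) (hε1 : ε ≤ 1) (K T : ℕ) : 0 ≤ Phat ε K T :=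
  sum_nonneg fun _ _ ↦ by have := sub_nonneg.mpr hε1; positivity

theorem Phat_succ_eq_binomialTail (ε : ℝ) (k T : ℕ) :
    Phat ε (k + 1) T = binomialTail (1 - ε) ε T (k + 1) := by
  induction T with
  | zero => simp [Phat, binomialTail]
  | succ T ih =>
    rcases lt_or_ge T k with hT | hT
    · simp [Phat, binomialTail, Icc_eq_empty_of_lt (show T + 1 < k + 1 by omega)]
    rw [binomialTail_succ_succ (sub_add_cancel 1 ε) hT, ← ih, Phat, Phat,
      sum_Icc_succ_top (by omega), binomialWeight]
    simp only [Nat.add_sub_cancel, Nat.add_sub_add_right]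
    ring

theorem Phat_mul_le_sq {ε : ℝ} (hε0 : 0 ≤ ε) (hε1 : ε ≤ 1) (k T : ℕ) :
    Phat ε (k + 1) T * Phat ε (k + 3) T ≤ Phat ε (k + 2) T ^ 2 := by
  simp only [Phat_succ_eq_binomialTail]
  have hp : 0 ≤ 1 - ε := sub_nonneg.mpr hε1
  exact sum_Icc_mul_sum_Icc_add_two_le_sq (binomialWeight_nonneg hp hε0 T)
    (fun _ _ ↦ binomialWeight_mul_succ_le hp hε0 T) (k + 1) T

theorem reward_log_concave_general (ε : ℝ) (hε0 : 0 < ε) (hε1 : ε < 1) (N : ℕ)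
    (K T : ℕ) (hK : 2 ≤ K) :
    Rew ε N T (K - 1) * Rew ε N T (K + 1) ≤ (Rew ε N T K) ^ 2 := by
  obtain ⟨k, rfl⟩ : ∃ k, K = k + 2 := ⟨K - 2, by omega⟩
  have hPhat := Phat_mul_le_sq hε0.le hε1.le k T
  have hfactor : ((k + 1 : ℕ) : ℝ) * ((k + 3 : ℕ) : ℝ) ≤ ((k + 2 : ℕ) : ℝ) ^ 2 := by
    push_cast; nlinarith
  have hnonneg := mul_nonneg (Phat_nonneg hε0.le hε1.le (k + 1) T)
    (Phat_nonneg hε0.le hε1.le (k + 3) T)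
  simp only [Rew, Pall, show k + 2 - 1 = k + 1 by omega, show k + 2 + 1 = k + 3 by omega]
  calc _ = ((k + 1 : ℕ) : ℝ) * ((k + 3 : ℕ) : ℝ) * (Phat ε (k + 1) T * Phat ε (k + 3) T) ^ N := by
        ring
    _ ≤ ((k + 2 : ℕ) : ℝ) ^ 2 * (Phat ε (k + 2) T ^ 2) ^ N := by gcongr
    _ = _ := by ring

/-- For `0 < ε < 1`, `N ≥ 1`, `2 ≤ K` and `K+1 ≤ T`, the expected
immediate reward is log-concave in the block size: `R_T(K)² ≥ R_T(K-1) · R_T(K+1)`. -/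
theorem reward_log_concave (ε : ℝ) (hε0 : 0 < ε) (hε1 : ε < 1) (N : ℕ) (hN : 1 ≤ N)
    (K T : ℕ) (hK : 2 ≤ K) (hKT : K + 1 ≤ T) :
    Rew ε N T (K - 1) * Rew ε N T (K + 1) ≤ (Rew ε N T K) ^ 2 :=
  reward_log_concave_general ε hε0 hε1 N K T hK
end

section
/- Let ε ∈ (0,1), N ≥ 1, and let t ≥ 1 and K be integers with 1 ≤ K and K+1 ≤ t. If R_t(K) > R_t(K+1), then for every j ∈ {1, …, t} one has K*_j ≤ K̂_j ≤ K. -/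
/-- `Kh` is the greedy block size for horizon `T`: the least maximizer of the
expected immediate reward `K ↦ R_T(K)` over `K ∈ {1,…,T}`. -/
def IsGreedy (ε : ℝ) (N T Kh : ℕ) : Prop :=
  Kh ∈ Finset.Icc 1 T ∧ (∀ K ∈ Finset.Icc 1 T, Rew ε N T K ≤ Rew ε N T Kh) ∧
  (∀ K ∈ Finset.Icc 1 T, (∀ K' ∈ Finset.Icc 1 T, Rew ε N T K' ≤ Rew ε N T K) → Kh ≤ K)

/-- Right-hand side of the Bellman recursion for the block-size-adaptation MDP:
`R_t(K) + ∑_{j=0}^{t-K} (P(K, t-j) - P(K, t-j-1)) · V(j)`. -/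
noncomputable def bellmanRHS (ε : ℝ) (N : ℕ) (V : ℕ → ℝ) (t K : ℕ) : ℝ :=
  Rew ε N t K +
    ∑ j ∈ Finset.range (t - K + 1), (Pall ε N K (t - j) - Pall ε N K (t - j - 1)) * V j

/-- `V` is the optimal value function of the finite-horizon MDP (Bellman recursion with
`V 0 = 0`, and `V t` the maximum of `bellmanRHS` over `K ∈ {1,…,t}`), and `Ks t` is the
least block size in `{1,…,t}` attaining that maximum. -/
def BellmanSystem (ε : ℝ) (N : ℕ) (V : ℕ → ℝ) (Ks : ℕ → ℕ) : Prop :=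
  V 0 = 0 ∧
  (∀ t, 1 ≤ t → ∀ K ∈ Finset.Icc 1 t, bellmanRHS ε N V t K ≤ V t) ∧
  (∀ t, 1 ≤ t → Ks t ∈ Finset.Icc 1 t ∧ V t = bellmanRHS ε N V t (Ks t) ∧
    ∀ K ∈ Finset.Icc 1 t, V t = bellmanRHS ε N V t K → Ks t ≤ K)


open Finset

namespace Nat

theorem choose_succ_mul_choose_le_of_le {m n : ℕ} (k : ℕ) (h : m ≤ n) :
    m.choose (k + 1) * n.choose k ≤ n.choose (k + 1) * m.choose k := by
  refine Nat.le_of_mul_le_mul_right ?_ k.succ_pos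
  calc m.choose (k + 1) * n.choose k * (k + 1)
      = m.choose (k + 1) * (k + 1) * n.choose k := by ring
    _ = m.choose k * (m - k) * n.choose k := by rw [choose_succ_right_eq]
    _ ≤ m.choose k * (n - k) * n.choose k := by gcongr
    _ = n.choose k * (n - k) * m.choose k := by ring
    _ = n.choose (k + 1) * (k + 1) * m.choose k := by rw [choose_succ_right_eq]
    _ = n.choose (k + 1) * m.choose k * (k + 1) := by ring

theorem choose_mul_choose_succ_le_of_le (n : ℕ) {k i : ℕ} (h : k ≤ i) :
    n.choose k * n.choose (i + 1) ≤ n.choose (k + 1) * n.choose i := by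
  refine Nat.le_of_mul_le_mul_right (c := (i + 1) * (k + 1)) ?_ (by positivity)
  calc n.choose k * n.choose (i + 1) * ((i + 1) * (k + 1))
      = n.choose k * (n.choose (i + 1) * (i + 1)) * (k + 1) := by ring
    _ = n.choose k * n.choose i * ((n - i) * (k + 1)) := by rw [choose_succ_right_eq]; ring
    _ ≤ n.choose k * n.choose i * ((n - k) * (i + 1)) := by gcongr
    _ = n.choose k * (n - k) * n.choose i * (i + 1) := by ring
    _ = n.choose (k + 1) * (k + 1) * n.choose i * (i + 1) := by rw [choose_succ_right_eq]
    _ = n.choose (k + 1) * n.choose i * ((i + 1) * (k + 1)) := by ring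

end Nat

theorem Finset.sum_Icc_add_one (f : ℕ → ℝ) (a b : ℕ) :
    ∑ i ∈ Icc a b, f (i + 1) = ∑ i ∈ Icc (a + 1) (b + 1), f i := by
  rw [← map_add_right_Icc, sum_map]
  rfl

theorem Finset.sum_Icc_eq_add_sum_Icc_add_one (f : ℕ → ℝ) {a b : ℕ} (h : a ≤ b) :
    ∑ i ∈ Icc a b, f i = f a + ∑ i ∈ Icc (a + 1) b, f i := by
  rw [Icc_eq_cons_Ioc h, sum_cons, Icc_add_one_left_eq_Ioc]

theorem Finset.sum_mul_le_mul_sum {ι : Type*} {s t : Finset ι} (hst : s ⊆ t) {f g : ι → ℝ}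
    {a b : ℝ} (hb : 0 ≤ b) (hg : ∀ i ∈ t, 0 ≤ g i) (h : ∀ i ∈ s, f i * a ≤ b * g i) :
    (∑ i ∈ s, f i) * a ≤ b * ∑ i ∈ t, g i := by
  rw [sum_mul, mul_sum]
  exact (sum_le_sum h).trans
    (sum_le_sum_of_subset_of_nonneg hst fun i hi _ => mul_nonneg hb (hg i hi))

theorem Finset.sum_range_mul_le_sum_range_mul {m n : ℕ} (hmn : m ≤ n) {f g d : ℕ → ℝ}
    (hfg : ∀ i < m, f i ≤ g i) (hg : ∀ i < n, 0 ≤ g i) (hd : ∀ i < n, 0 ≤ d i) :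
    ∑ i ∈ range m, f i * d i ≤ ∑ i ∈ range n, g i * d i := by
  refine (sum_le_sum fun i hi => ?_).trans (sum_le_sum_of_subset_of_nonneg
    (range_subset_range.2 hmn) fun i hi _ => ?_)
  · have hi := mem_range.1 hi
    exact mul_le_mul_of_nonneg_right (hfg i hi) (hd i (by omega))
  · have hi := mem_range.1 hi
    exact mul_nonneg (hg i hi) (hd i hi)

theorem Finset.sum_range_sub_mul_eq (b W : ℕ → ℝ) (M : ℕ) :
    ∑ i ∈ range (M + 1), (b i - b (i + 1)) * W i
      = b 0 * W 0 - b (M + 1) * W M + ∑ i ∈ range M, b (i + 1) * (W (i + 1) - W i) := by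
  induction M with
  | zero => simp only [zero_add, range_one, sum_singleton, range_zero, sum_empty, add_zero]; ring
  | succ M ih => rw [sum_range_succ, ih, sum_range_succ]; ring

theorem Finset.sum_Icc_mul_sum_Icc_le_sq {b : ℕ → ℝ} (hb : ∀ i, 0 ≤ b i) {K T : ℕ}
    (hratio : ∀ i, K ≤ i → i + 1 ≤ T → b K * b (i + 1) ≤ b (K + 1) * b i) :
    (∑ i ∈ Icc K T, b i) * ∑ i ∈ Icc (K + 2) T, b i ≤ (∑ i ∈ Icc (K + 1) T, b i) ^ 2 := by
  rcases lt_or_ge T (K + 2) with hT | hT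
  · rw [Icc_eq_empty_of_lt hT, sum_empty, mul_zero]
    positivity
  obtain ⟨T, rfl⟩ : ∃ T', T = T' + 1 := ⟨T - 1, by omega⟩
  set S := ∑ i ∈ Icc (K + 1) (T + 1), b i
  have key : (∑ i ∈ Icc (K + 2) (T + 1), b i) * b K ≤ b (K + 1) * S := by
    rw [← sum_Icc_add_one]
    exact sum_mul_le_mul_sum (Icc_subset_Icc_right T.le_succ) (hb _) (fun i _ => hb i)
      fun i hi => by
        rw [mul_comm]
        exact hratio i (by grind) (by grind)
  calc (∑ i ∈ Icc K (T + 1), b i) * ∑ i ∈ Icc (K + 2) (T + 1), b i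
      = (∑ i ∈ Icc (K + 2) (T + 1), b i) * b K + S * ∑ i ∈ Icc (K + 2) (T + 1), b i := by
        rw [sum_Icc_eq_add_sum_Icc_add_one _ (by omega)]; ring
    _ ≤ b (K + 1) * S + S * ∑ i ∈ Icc (K + 2) (T + 1), b i := by gcongr
    _ = S ^ 2 := by
        have hS : S = b (K + 1) + ∑ i ∈ Icc (K + 2) (T + 1), b i :=
          sum_Icc_eq_add_sum_Icc_add_one b (by omega)
        rw [hS]; ring

theorem natCast_mul_pow_mul_pow_le {x y : ℝ} (hx : 0 ≤ x) (hy : 0 ≤ y)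
    {m n m' n' a b c d a' b' c' d' : ℕ} (hmn : m * n ≤ m' * n') (hac : a + c = a' + c')
    (hbd : b + d = b' + d') :
    m * x ^ a * y ^ b * (n * x ^ c * y ^ d) ≤ m' * x ^ a' * y ^ b' * (n' * x ^ c' * y ^ d') :=
  calc m * x ^ a * y ^ b * (n * x ^ c * y ^ d)
        = ((m * n : ℕ) : ℝ) * (x ^ (a + c) * y ^ (b + d)) := by push_cast; ring
    _ ≤ ((m' * n' : ℕ) : ℝ) * (x ^ (a' + c') * y ^ (b' + d')) := by
        rw [hac, hbd]; gcongr
    _ = m' * x ^ a' * y ^ b' * (n' * x ^ c' * y ^ d') := by push_cast; ring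

section Erasure

variable {ε : ℝ}

/-- Probability that the `K`-th successful reception happens exactly in slot `τ`. -/
noncomputable def kthSuccessProb (ε : ℝ) (K τ : ℕ) : ℝ :=
  ((τ - 1).choose (K - 1) : ℝ) * ε ^ (τ - K) * (1 - ε) ^ K

noncomputable def binomProb (ε : ℝ) (T i : ℕ) : ℝ :=
  (T.choose i : ℝ) * (1 - ε) ^ i * ε ^ (T - i)

noncomputable def binomTail (ε : ℝ) (K T : ℕ) : ℝ :=
  ∑ i ∈ Icc K T, binomProb ε T i

theorem kthSuccessProb_nonneg (hε0 : 0 ≤ ε) (hε1 : ε ≤ 1) (K τ : ℕ) :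
    0 ≤ kthSuccessProb ε K τ := by
  have : 0 ≤ 1 - ε := by linarith
  unfold kthSuccessProb; positivity

theorem binomProb_nonneg (hε0 : 0 ≤ ε) (hε1 : ε ≤ 1) (T i : ℕ) : 0 ≤ binomProb ε T i := by
  have : 0 ≤ 1 - ε := by linarith
  unfold binomProb; positivity

theorem kthSuccessProb_succ_mul_le (hε0 : 0 ≤ ε) (hε1 : ε ≤ 1) {K τ T : ℕ} (hK : 1 ≤ K)
    (hτ : K + 1 ≤ τ) (hτT : τ ≤ T) :
    kthSuccessProb ε (K + 1) τ * kthSuccessProb ε K T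
      ≤ kthSuccessProb ε (K + 1) T * kthSuccessProb ε K τ := by
  obtain ⟨k, rfl⟩ : ∃ k, K = k + 1 := ⟨K - 1, by omega⟩
  unfold kthSuccessProb
  refine natCast_mul_pow_mul_pow_le hε0 (by linarith) ?_ (by omega) (by omega)
  simpa using (τ - 1).choose_succ_mul_choose_le_of_le (n := T - 1) k (by omega)

theorem binomProb_mul_succ_le (hε0 : 0 ≤ ε) (hε1 : ε ≤ 1) {T K i : ℕ} (hKi : K ≤ i)
    (hiT : i + 1 ≤ T) :
    binomProb ε T K * binomProb ε T (i + 1) ≤ binomProb ε T (K + 1) * binomProb ε T i :=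
  natCast_mul_pow_mul_pow_le (by linarith) hε0 (T.choose_mul_choose_succ_le_of_le hKi)
    (by omega) (by omega)

theorem binomProb_succ_succ (T i : ℕ) :
    binomProb ε (T + 1) (i + 1) = (1 - ε) * binomProb ε T i + ε * binomProb ε T (i + 1) := by
  unfold binomProb
  rw [Nat.choose_succ_succ', Nat.add_sub_add_right]
  rcases lt_or_ge T (i + 1) with h | h
  · rw [Nat.choose_eq_zero_of_lt h]; push_cast; ring
  · rw [show T - i = T - (i + 1) + 1 by omega]; push_cast; ring

theorem phat_eq_sum (K T : ℕ) : Phat ε K T = ∑ τ ∈ Icc K T, kthSuccessProb ε K τ := rfl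

theorem phat_of_lt {K T : ℕ} (h : T < K) : Phat ε K T = 0 := by
  rw [phat_eq_sum, Icc_eq_empty_of_lt h, sum_empty]

theorem phat_succ {K T : ℕ} (h : K ≤ T + 1) :
    Phat ε K (T + 1) = Phat ε K T + kthSuccessProb ε K (T + 1) :=
  sum_Icc_succ_top h _

theorem binomTail_succ {k T : ℕ} (h : k ≤ T) :
    binomTail ε (k + 1) (T + 1) = binomTail ε (k + 1) T + kthSuccessProb ε (k + 1) (T + 1) := by
  have hlast : binomProb ε T (T + 1) = 0 := by simp [binomProb]
  calc binomTail ε (k + 1) (T + 1)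
      = (1 - ε) * ∑ i ∈ Icc k T, binomProb ε T i + ε * ∑ i ∈ Icc k T, binomProb ε T (i + 1) := by
        simp only [binomTail, ← sum_Icc_add_one, binomProb_succ_succ, sum_add_distrib, mul_sum]
    _ = (1 - ε) * (binomProb ε T k + binomTail ε (k + 1) T) + ε * binomTail ε (k + 1) T := by
        rw [sum_Icc_eq_add_sum_Icc_add_one _ h, sum_Icc_add_one, sum_Icc_succ_top (by omega),
          hlast, add_zero, binomTail]
    _ = binomTail ε (k + 1) T + kthSuccessProb ε (k + 1) (T + 1) := by
        simp only [binomProb, kthSuccessProb, Nat.add_sub_cancel, Nat.add_sub_add_right]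
        ring

/-- The `K`-th success arrives by slot `T` iff at least `K` of the first `T` slots succeed. -/
theorem phat_eq_binomTail {K : ℕ} (hK : 1 ≤ K) (T : ℕ) : Phat ε K T = binomTail ε K T := by
  induction T with
  | zero => rw [phat_of_lt hK, binomTail, Icc_eq_empty_of_lt hK, sum_empty]
  | succ T ih =>
    rcases lt_or_ge (T + 1) K with h | h
    · rw [phat_of_lt h, binomTail, Icc_eq_empty_of_lt h, sum_empty]
    · obtain ⟨k, rfl⟩ : ∃ k, K = k + 1 := ⟨K - 1, by omega⟩
      rw [phat_succ h, binomTail_succ (by omega), ih]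

theorem phat_nonneg (hε0 : 0 ≤ ε) (hε1 : ε ≤ 1) (K T : ℕ) : 0 ≤ Phat ε K T :=
  sum_nonneg fun τ _ => kthSuccessProb_nonneg hε0 hε1 K τ

theorem phat_pos (hε0 : 0 ≤ ε) (hε1 : ε < 1) {K T : ℕ} (hKT : K ≤ T) : 0 < Phat ε K T := by
  have hterm : 0 < kthSuccessProb ε K K := by
    have : 0 < 1 - ε := by linarith
    simp only [kthSuccessProb, Nat.choose_self, Nat.cast_one, tsub_self, pow_zero, one_mul]
    positivity
  exact hterm.trans_le (single_le_sum (fun τ _ => kthSuccessProb_nonneg hε0 hε1.le K τ)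
    (mem_Icc.2 ⟨le_rfl, hKT⟩))

theorem phat_mono (hε0 : 0 ≤ ε) (hε1 : ε ≤ 1) (K : ℕ) : Monotone (Phat ε K) := fun _ _ h =>
  sum_le_sum_of_subset_of_nonneg (Icc_subset_Icc_right h) fun τ _ _ =>
    kthSuccessProb_nonneg hε0 hε1 K τ

theorem phat_anti (hε0 : 0 ≤ ε) (hε1 : ε ≤ 1) {K K' : ℕ} (hK : 1 ≤ K) (hKK' : K ≤ K') (T : ℕ) :
    Phat ε K' T ≤ Phat ε K T := by
  rw [phat_eq_binomTail hK, phat_eq_binomTail (hK.trans hKK')]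
  exact sum_le_sum_of_subset_of_nonneg (Icc_subset_Icc_left hKK') fun i _ _ =>
    binomProb_nonneg hε0 hε1 T i

theorem phat_mul_phat_add_two_le_sq (hε0 : 0 ≤ ε) (hε1 : ε ≤ 1) {K : ℕ} (hK : 1 ≤ K) (T : ℕ) :
    Phat ε K T * Phat ε (K + 2) T ≤ Phat ε (K + 1) T ^ 2 := by
  rw [phat_eq_binomTail hK, phat_eq_binomTail (by omega), phat_eq_binomTail (by omega)]
  exact sum_Icc_mul_sum_Icc_le_sq (binomProb_nonneg hε0 hε1 T) fun _ hKi hiT =>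
    binomProb_mul_succ_le hε0 hε1 hKi hiT

theorem phat_succ_mul_phat_succ_le (hε0 : 0 ≤ ε) (hε1 : ε ≤ 1) {K T : ℕ} (hK : 1 ≤ K)
    (hKT : K ≤ T) :
    Phat ε (K + 1) T * Phat ε K (T + 1) ≤ Phat ε (K + 1) (T + 1) * Phat ε K T := by
  have key : Phat ε (K + 1) T * kthSuccessProb ε K (T + 1)
      ≤ kthSuccessProb ε (K + 1) (T + 1) * Phat ε K T :=
    sum_mul_le_mul_sum (Icc_subset_Icc_left K.le_succ) (kthSuccessProb_nonneg hε0 hε1 _ _)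
      (fun τ _ => kthSuccessProb_nonneg hε0 hε1 K τ) fun τ hτ =>
        kthSuccessProb_succ_mul_le hε0 hε1 hK (mem_Icc.1 hτ).1 (by grind)
  rw [phat_succ (by omega), phat_succ (by omega)]
  linarith

theorem pall_nonneg (hε0 : 0 ≤ ε) (hε1 : ε ≤ 1) (N K T : ℕ) : 0 ≤ Pall ε N K T :=
  pow_nonneg (phat_nonneg hε0 hε1 K T) N

theorem pall_mono (hε0 : 0 ≤ ε) (hε1 : ε ≤ 1) (N K : ℕ) : Monotone (Pall ε N K) := fun _ _ h =>
  pow_le_pow_left₀ (phat_nonneg hε0 hε1 K _) (phat_mono hε0 hε1 K h) N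

theorem pall_anti (hε0 : 0 ≤ ε) (hε1 : ε ≤ 1) {K K' : ℕ} (hK : 1 ≤ K) (hKK' : K ≤ K') (N T : ℕ) :
    Pall ε N K' T ≤ Pall ε N K T :=
  pow_le_pow_left₀ (phat_nonneg hε0 hε1 K' T) (phat_anti hε0 hε1 hK hKK' T) N

theorem pall_of_lt {N K T : ℕ} (hN : 0 < N) (h : T < K) : Pall ε N K T = 0 := by
  rw [Pall, phat_of_lt h, zero_pow hN.ne']

theorem rew_nonneg (hε0 : 0 ≤ ε) (hε1 : ε ≤ 1) (N T K : ℕ) : 0 ≤ Rew ε N T K :=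
  mul_nonneg K.cast_nonneg (pall_nonneg hε0 hε1 N K T)

theorem rew_mono (hε0 : 0 ≤ ε) (hε1 : ε ≤ 1) {T T' : ℕ} (h : T ≤ T') (N K : ℕ) :
    Rew ε N T K ≤ Rew ε N T' K :=
  mul_le_mul_of_nonneg_left (pall_mono hε0 hε1 N K h) K.cast_nonneg

theorem add_two_mul_le_of_mul_le_sq {k a b c : ℝ} (hk : 0 ≤ k) (hc : 0 ≤ c) (hcb : c ≤ b)
    (habc : a * c ≤ b ^ 2) (h : (k + 1) * b ≤ k * a) : (k + 2) * c ≤ (k + 1) * b := by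
  rcases (hc.trans hcb).eq_or_lt with hb | hb
  · rw [← hb] at hcb ⊢
    simp [le_antisymm hcb hc]
  refine le_of_mul_le_mul_left ?_ (by positivity : 0 < (k + 1) * b)
  calc (k + 1) * b * ((k + 2) * c) ≤ k * a * ((k + 2) * c) := by gcongr
    _ = k * (k + 2) * (a * c) := by ring
    _ ≤ k * (k + 2) * b ^ 2 := by gcongr
    _ ≤ (k + 1) ^ 2 * b ^ 2 := by gcongr; nlinarith
    _ = (k + 1) * b * ((k + 1) * b) := by ring

theorem rew_add_two_le (hε0 : 0 ≤ ε) (hε1 : ε ≤ 1) {N T K : ℕ} (hK : 1 ≤ K)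
    (h : Rew ε N T (K + 1) ≤ Rew ε N T K) : Rew ε N T (K + 2) ≤ Rew ε N T (K + 1) := by
  have hlc : Pall ε N K T * Pall ε N (K + 2) T ≤ Pall ε N (K + 1) T ^ 2 := by
    rw [Pall, Pall, Pall, ← mul_pow, ← pow_mul, mul_comm N 2, pow_mul]
    exact pow_le_pow_left₀ (mul_nonneg (phat_nonneg hε0 hε1 _ _) (phat_nonneg hε0 hε1 _ _))
      (phat_mul_phat_add_two_le_sq hε0 hε1 hK T) N
  unfold Rew at h ⊢
  push_cast at h ⊢
  exact add_two_mul_le_of_mul_le_sq K.cast_nonneg (pall_nonneg hε0 hε1 N _ T)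
    (pall_anti hε0 hε1 (by omega) (by omega) N T) hlc h

theorem rew_le_of_horizon_succ (hε0 : 0 ≤ ε) (hε1 : ε < 1) {N T K : ℕ} (hK : 1 ≤ K)
    (hKT : K ≤ T) (h : Rew ε N (T + 1) (K + 1) ≤ Rew ε N (T + 1) K) :
    Rew ε N T (K + 1) ≤ Rew ε N T K := by
  have hratio :
      Pall ε N (K + 1) T * Pall ε N K (T + 1) ≤ Pall ε N (K + 1) (T + 1) * Pall ε N K T := by
    simp only [Pall, ← mul_pow]
    exact pow_le_pow_left₀ (mul_nonneg (phat_nonneg hε0 hε1.le _ _) (phat_nonneg hε0 hε1.le _ _))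
      (phat_succ_mul_phat_succ_le hε0 hε1.le hK hKT) N
  have hpos : 0 < Pall ε N K (T + 1) := pow_pos (phat_pos hε0 hε1 (by omega)) N
  have hx := pall_nonneg hε0 hε1.le N K T
  unfold Rew at h ⊢
  push_cast at h ⊢
  refine le_of_mul_le_mul_right ?_ hpos
  calc ((K : ℝ) + 1) * Pall ε N (K + 1) T * Pall ε N K (T + 1)
      ≤ ((K : ℝ) + 1) * (Pall ε N (K + 1) (T + 1) * Pall ε N K T) := by
        rw [mul_assoc]; gcongr
    _ ≤ K * Pall ε N K (T + 1) * Pall ε N K T := by rw [← mul_assoc]; gcongr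
    _ = K * Pall ε N K T * Pall ε N K (T + 1) := by ring

theorem rew_succ_le_of_le_horizon (hε0 : 0 ≤ ε) (hε1 : ε < 1) {N t j K : ℕ} (hK : 1 ≤ K)
    (hKj : K ≤ j) (hjt : j ≤ t) (h : Rew ε N t (K + 1) ≤ Rew ε N t K) :
    Rew ε N j (K + 1) ≤ Rew ε N j K := by
  induction t, hjt using Nat.le_induction with
  | base => exact h
  | succ t hjt ih => exact ih (rew_le_of_horizon_succ hε0 hε1 hK (hKj.trans hjt) h)

theorem rew_le_of_rew_succ_le (hε0 : 0 ≤ ε) (hε1 : ε ≤ 1) {N T K K' : ℕ} (hK : 1 ≤ K)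
    (h : Rew ε N T (K + 1) ≤ Rew ε N T K) (hKK' : K ≤ K') : Rew ε N T K' ≤ Rew ε N T K := by
  have hstep : ∀ n ≥ K, Rew ε N T (n + 1) ≤ Rew ε N T n := by
    intro n hn
    induction n, hn using Nat.le_induction with
    | base => exact h
    | succ n hn ih => exact rew_add_two_le hε0 hε1 (hK.trans hn) ih
  exact antitoneOn_nat_Ici_of_succ_le hstep (Set.mem_Ici.2 le_rfl) hKK' hKK'

end Erasure

section Bellman

variable {ε : ℝ} {N : ℕ} {V : ℕ → ℝ}

/-- `𝔼[V(t - τ); τ ≤ t]` for the decoding time `τ` of a block of size `K`, after Abel summation. -/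
noncomputable def continuationValue (ε : ℝ) (N : ℕ) (V : ℕ → ℝ) (t K : ℕ) : ℝ :=
  ∑ i ∈ range (t - K), Pall ε N K (t - i - 1) * (V (i + 1) - V i)

theorem bellmanRHS_eq_rew_add_continuationValue (hN : 0 < N) (hV0 : V 0 = 0) {t K : ℕ} (hK : 1 ≤ K)
    (hKt : K ≤ t) : bellmanRHS ε N V t K = Rew ε N t K + continuationValue ε N V t K := by
  have hlast : Pall ε N K (t - (t - K + 1)) = 0 := pall_of_lt hN (by omega)
  have habel := sum_range_sub_mul_eq (fun i => Pall ε N K (t - i)) V (t - K)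
  simp only [hV0, hlast, mul_zero, zero_mul, sub_zero, zero_add] at habel
  simp only [bellmanRHS, continuationValue, Nat.sub_sub, habel]

theorem continuationValue_le_succ (hε0 : 0 ≤ ε) (hε1 : ε ≤ 1) {t K : ℕ}
    (hV : ∀ i < t + 1 - K, V i ≤ V (i + 1)) :
    continuationValue ε N V t K ≤ continuationValue ε N V (t + 1) K :=
  sum_range_mul_le_sum_range_mul (by omega)
    (fun _ _ => pall_mono hε0 hε1 N K (by omega)) (fun _ _ => pall_nonneg hε0 hε1 N K _)
    fun i hi => sub_nonneg.2 (hV i hi)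

theorem continuationValue_anti (hε0 : 0 ≤ ε) (hε1 : ε ≤ 1) (hV : Monotone V) {t K K' : ℕ}
    (hK : 1 ≤ K) (hKK' : K ≤ K') : continuationValue ε N V t K' ≤ continuationValue ε N V t K :=
  sum_range_mul_le_sum_range_mul (by omega)
    (fun _ _ => pall_anti hε0 hε1 hK hKK' N _) (fun _ _ => pall_nonneg hε0 hε1 N K _)
    fun i _ => sub_nonneg.2 (hV i.le_succ)

theorem BellmanSystem.monotone {Ks : ℕ → ℕ} (hε0 : 0 ≤ ε) (hε1 : ε ≤ 1) (hN : 0 < N)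
    (hB : BellmanSystem ε N V Ks) : Monotone V := by
  obtain ⟨hV0, hle, hKs⟩ := hB
  refine monotone_nat_of_le_succ fun n => ?_
  induction n using Nat.strong_induction_on with
  | _ n ih =>
    rcases n.eq_zero_or_pos with rfl | hn
    · calc V 0 = 0 := hV0
        _ ≤ bellmanRHS ε N V 1 1 := by
          rw [bellmanRHS_eq_rew_add_continuationValue hN hV0 le_rfl le_rfl, continuationValue,
            Nat.sub_self, sum_range_zero, add_zero]
          exact rew_nonneg hε0 hε1 N 1 1
        _ ≤ V 1 := hle 1 le_rfl 1 (mem_Icc.2 ⟨le_rfl, le_rfl⟩)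
    obtain ⟨hKs, hVeq, -⟩ := hKs n hn
    obtain ⟨hK, hKn⟩ := mem_Icc.1 hKs
    calc V n = Rew ε N n (Ks n) + continuationValue ε N V n (Ks n) := by
          rw [hVeq, bellmanRHS_eq_rew_add_continuationValue hN hV0 hK hKn]
      _ ≤ Rew ε N (n + 1) (Ks n) + continuationValue ε N V (n + 1) (Ks n) :=
          add_le_add (rew_mono hε0 hε1 n.le_succ N _)
            (continuationValue_le_succ hε0 hε1 fun i hi => ih i (by omega))
      _ = bellmanRHS ε N V (n + 1) (Ks n) :=
          (bellmanRHS_eq_rew_add_continuationValue hN hV0 hK (by omega)).symm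
      _ ≤ V (n + 1) := hle (n + 1) (by omega) _ (mem_Icc.2 ⟨hK, by omega⟩)

theorem BellmanSystem.le_of_isGreedy {Ks : ℕ → ℕ} (hε0 : 0 ≤ ε) (hε1 : ε ≤ 1) (hN : 0 < N)
    (hB : BellmanSystem ε N V Ks) {j Kh : ℕ} (hG : IsGreedy ε N j Kh) : Ks j ≤ Kh := by
  have hV := hB.monotone hε0 hε1 hN
  obtain ⟨hV0, hle, hKs⟩ := hB
  obtain ⟨hKh, hmax, -⟩ := hG
  obtain ⟨hKh1, hKhj⟩ := mem_Icc.1 hKh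
  obtain ⟨hKsj, hVeq, hmin⟩ := hKs j (hKh1.trans hKhj)
  obtain ⟨hKs1, hKsj'⟩ := mem_Icc.1 hKsj
  by_contra! hlt
  have hVKh : V j = bellmanRHS ε N V j Kh := by
    refine le_antisymm ?_ (hle j (hKh1.trans hKhj) Kh hKh)
    rw [hVeq, bellmanRHS_eq_rew_add_continuationValue hN hV0 hKs1 hKsj',
      bellmanRHS_eq_rew_add_continuationValue hN hV0 hKh1 hKhj]
    exact add_le_add (hmax _ hKsj) (continuationValue_anti hε0 hε1 hV hKh1 hlt.le)
  exact absurd (hmin Kh hKh hVKh) (not_le.2 hlt)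

end Bellman

theorem IsGreedy.le_of_rew_le {ε : ℝ} {N T Kh K : ℕ} (hG : IsGreedy ε N T Kh) (hK : 1 ≤ K)
    (h : ∀ K', K ≤ K' → Rew ε N T K' ≤ Rew ε N T K) : Kh ≤ K := by
  obtain ⟨hKh, hmax, hmin⟩ := hG
  by_contra! hlt
  have hKT : K ∈ Icc 1 T := mem_Icc.2 ⟨hK, hlt.le.trans (mem_Icc.1 hKh).2⟩
  exact absurd (hmin K hKT fun K' hK' => (hmax K' hK').trans (h Kh hlt.le)) (not_le.2 hlt)

theorem corollary_Kt_general (ε : ℝ) (hε0 : 0 < ε) (hε1 : ε < 1) (N : ℕ) (hN : 1 ≤ N)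
    (V : ℕ → ℝ) (Ks : ℕ → ℕ) (hB : BellmanSystem ε N V Ks)
    (t K : ℕ) (hK : 1 ≤ K)
    (hR : Rew ε N t (K + 1) < Rew ε N t K)
    (j : ℕ) (hjt : j ≤ t) (Khj : ℕ) (hG : IsGreedy ε N j Khj) :
    Ks j ≤ Khj ∧ Khj ≤ K := by
  refine ⟨hB.le_of_isGreedy hε0.le hε1.le hN hG, ?_⟩
  rcases lt_or_ge j K with hjK | hKj
  · exact (mem_Icc.1 hG.1).2.trans hjK.le
  · exact hG.le_of_rew_le hK fun K' => rew_le_of_rew_succ_le hε0.le hε1.le hK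
      (rew_succ_le_of_le_horizon hε0.le hε1 hK hKj hjt hR.le)

/-- Let `0 < ε < 1`, `N ≥ 1`, and let `t ≥ 1`, `K` with `1 ≤ K` and
`K+1 ≤ t`. If `R_t(K) > R_t(K+1)`, then for every `j ∈ {1,…,t}` one has
`K*_j ≤ K̂_j ≤ K`. -/
theorem corollary_Kt (ε : ℝ) (hε0 : 0 < ε) (hε1 : ε < 1) (N : ℕ) (hN : 1 ≤ N)
    (V : ℕ → ℝ) (Ks : ℕ → ℕ) (hB : BellmanSystem ε N V Ks)
    (t K : ℕ) (hK : 1 ≤ K) (hKt : K + 1 ≤ t)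
    (hR : Rew ε N t (K + 1) < Rew ε N t K)
    (j : ℕ) (hj1 : 1 ≤ j) (hjt : j ≤ t) (Khj : ℕ) (hG : IsGreedy ε N j Khj) :
    Ks j ≤ Khj ∧ Khj ≤ K :=
  corollary_Kt_general ε hε0 hε1 N hN V Ks hB t K hK hR j hjt Khj hG
end
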